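/- Equivalence of the two descriptions of the secrecy-capacity region of the SD-BC with a confidential message M₂ (Appendix A). Fix finite alphabets 𝒳, 𝒴₁, 𝒴₂, a function f : 𝒳 → 𝒴₁ and a stochastic kernel Q_{Y₂|X}. For finite sets 𝒲, 𝒱 and a joint PMF P_{W,V,X} on 𝒲×𝒱×𝒳, let Y₁ = f(X) and let Y₂ be generated from X through Q_{Y₂|X} conditionally independently of (W,V) given X. Define region A as the union, over all finite 𝒲, 𝒱 and all such PMFs, of the sets {(R₁,R₂) ∈ ℝ₊² : R₁ ≤ H(Y₁); R₁ ≤ H(Y₁|W) + I(W;Y₂); R₂ ≤ I(V;Y₂|W) − I(V;Y₁|W)}. Define region B as the union, over the same domain, of the sets {(R₁,R₂) ∈ ℝ₊² : R₁ ≤ H(Y₁); R₂ ≤ I(V;Y₂|W) − I(V;Y₁|W); R₁+R₂ ≤ H(Y₁|W,V) + I(W,V;Y₂)}. Then A = B. -/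
import Mathlib


open scoped Classical BigOperators

noncomputable section

/-- Entropy (base 2) of a finitely supported distribution given as a function. -/
def entFun {α : Type} [Fintype α] (q : α → ℝ) : ℝ :=
  -∑ a, q a * Real.logb 2 (q a)

/-- Distribution (pushforward) of the random variable `A` under the pmf `p`. -/
def distOf {Ω α : Type} [Fintype Ω] [Fintype α] (p : Ω → ℝ) (A : Ω → α) : α → ℝ :=
  fun a => ∑ ω, if A ω = a then p ω else 0

/-- Shannon entropy `H(A)` (base 2). -/
def Hent {Ω α : Type} [Fintype Ω] [Fintype α] (p : Ω → ℝ) (A : Ω → α) : ℝ :=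
  entFun (distOf p A)

/-- Conditional entropy `H(A|B)`. -/
def CHent {Ω α β : Type} [Fintype Ω] [Fintype α] [Fintype β]
    (p : Ω → ℝ) (A : Ω → α) (B : Ω → β) : ℝ :=
  Hent p (fun ω => (A ω, B ω)) - Hent p B

/-- Mutual information `I(A;B)`. -/
def MI {Ω α β : Type} [Fintype Ω] [Fintype α] [Fintype β]
    (p : Ω → ℝ) (A : Ω → α) (B : Ω → β) : ℝ :=
  Hent p A + Hent p B - Hent p (fun ω => (A ω, B ω))

/-- Conditional mutual information `I(A;B|C)`. -/
def CMI {Ω α β γ : Type} [Fintype Ω] [Fintype α] [Fintype β] [Fintype γ]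
    (p : Ω → ℝ) (A : Ω → α) (B : Ω → β) (C : Ω → γ) : ℝ :=
  Hent p (fun ω => (A ω, C ω)) + Hent p (fun ω => (B ω, C ω))
    - Hent p (fun ω => (A ω, B ω, C ω)) - Hent p C

/-- `p` is a probability mass function on the finite type `α`. -/
def IsPMF {α : Type} [Fintype α] (p : α → ℝ) : Prop :=
  (∀ a, 0 ≤ p a) ∧ ∑ a, p a = 1

set_option linter.unusedSectionVars false

section helpers
variable {Ω α β : Type} [Fintype Ω] [Fintype α] [Fintype β]

lemma distOf_nonneg (p : Ω → ℝ) (hp : ∀ ω, 0 ≤ p ω) (A : Ω → α) (a : α) :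
    0 ≤ distOf p A a := by
  unfold distOf
  apply Finset.sum_nonneg
  intro ω _
  split <;> simp [hp ω]

lemma sum_distOf (p : Ω → ℝ) (A : Ω → α) : ∑ a, distOf p A a = ∑ ω, p ω := by
  unfold distOf
  rw [Finset.sum_comm]
  apply Finset.sum_congr rfl
  intro ω _
  rw [Finset.sum_ite_eq]
  simp

lemma hent_inj (p : Ω → ℝ) (A : Ω → α) (g : α → β) (hg : Function.Injective g) :
    Hent p (fun ω => g (A ω)) = Hent p A := by
  unfold Hent entFun
  have h1 : ∀ a, distOf p (fun ω => g (A ω)) (g a) = distOf p A a := by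
    intro a
    unfold distOf
    apply Finset.sum_congr rfl
    intro ω _
    simp [hg.eq_iff]
  have h2 : ∀ b ∈ Finset.univ, b ∉ Finset.univ.image g →
      distOf p (fun ω => g (A ω)) b * Real.logb 2 (distOf p (fun ω => g (A ω)) b) = 0 := by
    intro b _ hb
    have : distOf p (fun ω => g (A ω)) b = 0 := by
      apply Finset.sum_eq_zero
      intro ω _
      rw [if_neg]
      intro h
      exact hb (Finset.mem_image.mpr ⟨A ω, Finset.mem_univ _, h⟩)
    rw [this, zero_mul]
  rw [← Finset.sum_subset (Finset.subset_univ (Finset.univ.image g)) h2]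
  rw [Finset.sum_image (fun a _ a' _ h => hg h)]
  congr 1
  apply Finset.sum_congr rfl
  intro a _
  rw [h1]

lemma distOf_distOf (p : Ω → ℝ) (F : Ω → α) (A : α → β) :
    distOf (distOf p F) A = distOf p (fun ω => A (F ω)) := by
  funext b
  unfold distOf
  have step : ∀ a, (if A a = b then (∑ ω, if F ω = a then p ω else 0) else 0)
      = ∑ ω, if F ω = a then (if A a = b then p ω else 0) else 0 := by
    intro a
    split <;> simp
  rw [Finset.sum_congr rfl (fun a _ => step a), Finset.sum_comm]
  apply Finset.sum_congr rfl
  intro ω _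
  rw [Finset.sum_ite_eq]
  simp

lemma hent_pushforward (p : Ω → ℝ) (F : Ω → α) (A : α → β) :
    Hent (distOf p F) A = Hent p (fun ω => A (F ω)) := by
  unfold Hent
  rw [distOf_distOf]

lemma distOf_mix_snd (μ : Fin 2 → ℝ) (hμ : ∑ t, μ t = 1) (p : Ω → ℝ) (A : Ω → α) :
    distOf (fun c : Fin 2 × Ω => μ c.1 * p c.2) (fun c => A c.2) = distOf p A := by
  funext a
  unfold distOf
  rw [Fintype.sum_prod_type]
  have step : ∀ t : Fin 2, (∑ ω, if A ω = a then μ t * p ω else 0)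
      = μ t * ∑ ω, if A ω = a then p ω else 0 := by
    intro t
    rw [Finset.mul_sum]
    apply Finset.sum_congr rfl
    intro ω _
    split <;> simp
  rw [Finset.sum_congr rfl (fun t _ => step t), ← Finset.sum_mul, hμ, one_mul]

lemma hent_mix (μ : Fin 2 → ℝ) (hμ0 : ∀ t, 0 ≤ μ t) (p : Ω → ℝ) (hp : IsPMF p)
    (A : Fin 2 → Ω → α) :
    Hent (fun c : Fin 2 × Ω => μ c.1 * p c.2) (fun c => (c.1, A c.1 c.2))
      = entFun μ + ∑ t, μ t * Hent p (A t) := by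
  have hdist : ∀ t a, distOf (fun c : Fin 2 × Ω => μ c.1 * p c.2)
      (fun c => (c.1, A c.1 c.2)) (t, a) = μ t * distOf p (A t) a := by
    intro t a
    unfold distOf
    rw [Fintype.sum_prod_type]
    have step : ∀ s : Fin 2, (∑ ω, if ((s, A s ω) : Fin 2 × α) = (t, a) then μ s * p ω else 0)
        = if s = t then μ s * ∑ ω, if A s ω = a then p ω else 0 else 0 := by
      intro s
      by_cases h : s = t
      · subst h
        rw [Finset.mul_sum]
        simp only [Prod.mk.injEq, true_and, if_true]
        apply Finset.sum_congr rfl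
        intro ω _
        split <;> simp
      · simp only [Prod.mk.injEq, h, false_and, if_false, if_neg h]
        simp
    simp only [step]
    rw [Finset.sum_ite_eq' Finset.univ t]
    simp
  unfold Hent entFun
  rw [Fintype.sum_prod_type]
  have key : ∀ x y : ℝ, 0 ≤ x → 0 ≤ y →
      (x * y) * Real.logb 2 (x * y) = y * (x * Real.logb 2 x) + x * (y * Real.logb 2 y) := by
    intro x y hx hy
    rcases eq_or_lt_of_le hx with h | h
    · simp [← h]
    rcases eq_or_lt_of_le hy with h' | h'
    · simp [← h']
    rw [Real.logb_mul (ne_of_gt h) (ne_of_gt h')]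
    ring
  have main : ∀ t : Fin 2, (∑ a, distOf (fun c : Fin 2 × Ω => μ c.1 * p c.2)
        (fun c => (c.1, A c.1 c.2)) (t, a)
        * Real.logb 2 (distOf (fun c : Fin 2 × Ω => μ c.1 * p c.2)
            (fun c => (c.1, A c.1 c.2)) (t, a)))
      = μ t * Real.logb 2 (μ t) + μ t * ∑ a, distOf p (A t) a * Real.logb 2 (distOf p (A t) a) := by
    intro t
    have : ∀ a, distOf (fun c : Fin 2 × Ω => μ c.1 * p c.2)
        (fun c => (c.1, A c.1 c.2)) (t, a)
        * Real.logb 2 (distOf (fun c : Fin 2 × Ω => μ c.1 * p c.2)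
            (fun c => (c.1, A c.1 c.2)) (t, a))
        = distOf p (A t) a * (μ t * Real.logb 2 (μ t))
          + μ t * (distOf p (A t) a * Real.logb 2 (distOf p (A t) a)) := by
      intro a
      rw [hdist t a]
      exact key (μ t) (distOf p (A t) a) (hμ0 t) (distOf_nonneg p hp.1 (A t) a)
    rw [Finset.sum_congr rfl (fun a _ => this a), Finset.sum_add_distrib,
      ← Finset.sum_mul, ← Finset.mul_sum, sum_distOf, hp.2, one_mul]
  rw [Finset.sum_congr rfl (fun t _ => main t), Finset.sum_add_distrib]
  simp only [mul_neg, Finset.sum_neg_distrib]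
  ring

lemma hent_mix₂ (μ : Fin 2 → ℝ) (hμ0 : ∀ t, 0 ≤ μ t) (p : Ω → ℝ) (hp : IsPMF p)
    (A : Fin 2 → Ω → α) (H0 H1 : ℝ) (h0 : Hent p (A 0) = H0) (h1 : Hent p (A 1) = H1) :
    Hent (fun c : Fin 2 × Ω => μ c.1 * p c.2) (fun c => (c.1, A c.1 c.2))
      = entFun μ + μ 0 * H0 + μ 1 * H1 := by
  rw [hent_mix μ hμ0 p hp A, Fin.sum_univ_two, h0, h1]
  ring

lemma distOf_eq_of_injective (p : Ω → ℝ) (F : Ω → α) (hF : Function.Injective F)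
    (p0 : α → ℝ) (h1 : ∀ ω, p0 (F ω) = p ω) (h2 : ∀ a, (∀ ω, F ω ≠ a) → p0 a = 0) :
    distOf p F = p0 := by
  funext a
  by_cases h : ∃ ω, F ω = a
  · obtain ⟨ω, rfl⟩ := h
    unfold distOf
    rw [Finset.sum_eq_single ω]
    · rw [if_pos rfl, h1]
    · intro b _ hb
      rw [if_neg (fun hh => hb (hF hh))]
    · simp
  · push_neg at h
    unfold distOf
    rw [h2 a h, Finset.sum_eq_zero]
    intro ω _
    rw [if_neg (h ω)]

end helpers

section main
variable {X Y1 Y2 : Type} [Fintype X] [Fintype Y1] [Fintype Y2]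

lemma isPMF_of_prod {kW kV : ℕ} (f : X → Y1) (Q2 : X → Y2 → ℝ) (hQ2 : ∀ x, IsPMF (Q2 x))
    (P : Fin kW × Fin kV × X → ℝ) (hP : IsPMF P)
    (p : Fin kW × Fin kV × X × Y1 × Y2 → ℝ)
    (hp : ∀ w v x y1 y2, p (w, v, x, y1, y2)
        = P (w, v, x) * ((if y1 = f x then (1:ℝ) else 0) * Q2 x y2)) :
    IsPMF p := by
  constructor
  · intro ω
    obtain ⟨w, v, x, y1, y2⟩ := ω
    rw [hp]
    apply mul_nonneg (hP.1 _)
    apply mul_nonneg _ ((hQ2 x).1 _)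
    split <;> norm_num
  · have h1 : ∀ x : X, (∑ y1 : Y1, ∑ y2 : Y2,
        ((if y1 = f x then (1:ℝ) else 0) * Q2 x y2)) = 1 := by
      intro x
      have hy : ∀ y1 : Y1, (∑ y2 : Y2, ((if y1 = f x then (1:ℝ) else 0) * Q2 x y2))
          = if y1 = f x then (1:ℝ) else 0 := by
        intro y1
        rw [← Finset.mul_sum, (hQ2 x).2, mul_one]
      rw [Finset.sum_congr rfl fun y1 _ => hy y1, Finset.sum_ite_eq' Finset.univ (f x)]
      simp
    have h2 : ∀ (w : Fin kW) (v : Fin kV) (x : X), (∑ y1 : Y1, ∑ y2 : Y2,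
        P (w,v,x) * ((if y1 = f x then (1:ℝ) else 0) * Q2 x y2)) = P (w,v,x) := by
      intro w v x
      have hy : ∀ y1 : Y1, (∑ y2 : Y2, P (w,v,x) * ((if y1 = f x then (1:ℝ) else 0) * Q2 x y2))
          = P (w,v,x) * ∑ y2 : Y2, ((if y1 = f x then (1:ℝ) else 0) * Q2 x y2) := by
        intro y1
        rw [Finset.mul_sum]
      rw [Finset.sum_congr rfl fun y1 _ => hy y1, ← Finset.mul_sum, h1 x, mul_one]
    have hPsum := hP.2
    simp only [Fintype.sum_prod_type] at hPsum ⊢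
    simp only [hp, h2]
    exact hPsum

lemma abc_identity {kW kV : ℕ} (p : Fin kW × Fin kV × X × Y1 × Y2 → ℝ) :
    CHent p (fun ω => ω.2.2.2.1) (fun ω => (ω.1, ω.2.1))
      + MI p (fun ω => (ω.1, ω.2.1)) (fun ω => ω.2.2.2.2)
    = (CHent p (fun ω => ω.2.2.2.1) (fun ω => ω.1)
        + MI p (fun ω => ω.1) (fun ω => ω.2.2.2.2))
      + (CMI p (fun ω => ω.2.1) (fun ω => ω.2.2.2.2) (fun ω => ω.1)
        - CMI p (fun ω => ω.2.1) (fun ω => ω.2.2.2.1) (fun ω => ω.1)) := by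
  have R1 : Hent p (fun ω => (ω.1, ω.2.2.2.2)) = Hent p (fun ω => (ω.2.2.2.2, ω.1)) :=
    hent_inj p (fun ω => (ω.2.2.2.2, ω.1)) (fun z => (z.2, z.1))
      (by intro u u' h; simp only [Prod.ext_iff] at h ⊢; tauto)
  have R2 : Hent p (fun ω => (ω.2.1, ω.2.2.2.1, ω.1))
      = Hent p (fun ω => (ω.2.2.2.1, (ω.1, ω.2.1))) :=
    hent_inj p (fun ω => (ω.2.2.2.1, (ω.1, ω.2.1))) (fun z => (z.2.2, z.1, z.2.1))
      (by intro u u' h; simp only [Prod.ext_iff] at h ⊢; tauto)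
  have R3 : Hent p (fun ω => (ω.2.1, ω.2.2.2.2, ω.1))
      = Hent p (fun ω => ((ω.1, ω.2.1), ω.2.2.2.2)) :=
    hent_inj p (fun ω => ((ω.1, ω.2.1), ω.2.2.2.2)) (fun z => (z.1.2, z.2, z.1.1))
      (by intro u u' h; simp only [Prod.ext_iff] at h ⊢; tauto)
  unfold CHent MI CMI
  linarith [R1, R2, R3]

end main

section construction
variable {X Y1 Y2 : Type} [Fintype X] [Fintype Y1] [Fintype Y2]

def muF (lam : ℝ) : Fin 2 → ℝ := fun t => if t = 0 then lam else 1 - lam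

def eEq (kW kV : ℕ) : Fin 2 × (Fin kW × Fin kV) ≃ Fin (2 * (kW * kV)) :=
  (Equiv.prodCongr (Equiv.refl (Fin 2)) finProdFinEquiv).trans finProdFinEquiv

def PhiMap (kW kV : ℕ) (v₀ : Fin kV) :
    Fin 2 × (Fin kW × Fin kV × X × Y1 × Y2) → Fin (2*(kW*kV)) × Fin kV × X × Y1 × Y2 :=
  fun cc => (eEq kW kV (cc.1, (cc.2.1, if cc.1 = 0 then v₀ else cc.2.2.1)),
    cc.2.2.1, cc.2.2.2.1, cc.2.2.2.2.1, cc.2.2.2.2.2)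

def Pcon (kW kV : ℕ) (v₀ : Fin kV) (lam : ℝ) (P : Fin kW × Fin kV × X → ℝ) :
    Fin (2*(kW*kV)) × Fin kV × X → ℝ :=
  fun q => ∑ s : Fin 2 × Fin kW,
    if eEq kW kV (s.1, (s.2, if s.1 = 0 then v₀ else q.2.1)) = q.1
    then muF lam s.1 * P (s.2, q.2.1, q.2.2) else 0

def pcon (f : X → Y1) (Q2 : X → Y2 → ℝ) (kW kV : ℕ) (v₀ : Fin kV) (lam : ℝ)
    (P : Fin kW × Fin kV × X → ℝ) :
    Fin (2*(kW*kV)) × Fin kV × X × Y1 × Y2 → ℝ :=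
  fun ω => Pcon kW kV v₀ lam P (ω.1, ω.2.1, ω.2.2.1)
    * ((if ω.2.2.2.1 = f ω.2.2.1 then (1:ℝ) else 0) * Q2 ω.2.2.1 ω.2.2.2.2)

lemma muF_zero (lam : ℝ) : muF lam 0 = lam := rfl

lemma muF_one (lam : ℝ) : muF lam 1 = 1 - lam := rfl

lemma muF_nonneg {lam : ℝ} (h0 : 0 ≤ lam) (h1 : lam ≤ 1) : ∀ t, 0 ≤ muF lam t := by
  intro t
  unfold muF
  split <;> linarith

lemma muF_sum (lam : ℝ) : ∑ t, muF lam t = 1 := by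
  rw [Fin.sum_univ_two, muF_zero, muF_one]
  ring

lemma phiMap_inj (kW kV : ℕ) (v₀ : Fin kV) :
    Function.Injective (PhiMap kW kV v₀ : Fin 2 × (Fin kW × Fin kV × X × Y1 × Y2) → _) := by
  intro cc cc' h
  unfold PhiMap at h
  simp only [Prod.ext_iff, EmbeddingLike.apply_eq_iff_eq] at h ⊢
  tauto

lemma pcon_eq_distOf {kW kV : ℕ} (f : X → Y1) (Q2 : X → Y2 → ℝ)
    (P : Fin kW × Fin kV × X → ℝ)
    (p : Fin kW × Fin kV × X × Y1 × Y2 → ℝ)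
    (hp : ∀ w v x y1 y2, p (w, v, x, y1, y2)
        = P (w, v, x) * ((if y1 = f x then (1:ℝ) else 0) * Q2 x y2))
    (lam : ℝ) (v₀ : Fin kV) :
    distOf (fun cc : Fin 2 × (Fin kW × Fin kV × X × Y1 × Y2) => muF lam cc.1 * p cc.2)
      (PhiMap kW kV v₀) = pcon f Q2 kW kV v₀ lam P := by
  apply distOf_eq_of_injective _ _ (phiMap_inj kW kV v₀)
  · intro cc
    obtain ⟨t, w, v, x, y1, y2⟩ := cc
    show Pcon kW kV v₀ lam P (eEq kW kV (t, (w, if t = 0 then v₀ else v)), v, x)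
        * ((if y1 = f x then (1:ℝ) else 0) * Q2 x y2) = muF lam t * p (w, v, x, y1, y2)
    have hsum : Pcon kW kV v₀ lam P (eEq kW kV (t, (w, if t = 0 then v₀ else v)), v, x)
        = muF lam t * P (w, v, x) := by
      unfold Pcon
      have hterm : ∀ s : Fin 2 × Fin kW,
          (if eEq kW kV (s.1, (s.2, if s.1 = 0 then v₀ else v))
              = eEq kW kV (t, (w, if t = 0 then v₀ else v))
           then muF lam s.1 * P (s.2, v, x) else 0)
          = if s = (t, w) then muF lam t * P (w, v, x) else 0 := by
        intro s
        by_cases hs : s = (t, w)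
        · rw [hs]
          simp
        · rw [if_neg hs, if_neg]
          intro hcon
          have h2 := (eEq kW kV).injective hcon
          simp only [Prod.ext_iff] at h2
          exact hs (Prod.ext h2.1 h2.2.1)
      rw [Finset.sum_congr rfl fun s _ => hterm s, Finset.sum_ite_eq' Finset.univ (t, w)]
      simp
    rw [hsum, hp]
    ring
  · intro ω' hω'
    obtain ⟨w', v, x, y1, y2⟩ := ω'
    show Pcon kW kV v₀ lam P (w', v, x)
        * ((if y1 = f x then (1:ℝ) else 0) * Q2 x y2) = 0
    have hzero : Pcon kW kV v₀ lam P (w', v, x) = 0 := by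
      unfold Pcon
      apply Finset.sum_eq_zero
      intro s _
      rw [if_neg]
      intro hcon
      apply hω' (s.1, (s.2, v, x, y1, y2))
      show (eEq kW kV (s.1, (s.2, if s.1 = 0 then v₀ else v)), v, x, y1, y2)
          = (w', v, x, y1, y2)
      rw [hcon]
    rw [hzero, zero_mul]

lemma pcon_isPMF {kW kV : ℕ} (v₀ : Fin kV) (lam : ℝ) (h0 : 0 ≤ lam) (h1 : lam ≤ 1)
    (P : Fin kW × Fin kV × X → ℝ) (hP : IsPMF P) :
    IsPMF (Pcon (X := X) kW kV v₀ lam P) := by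
  constructor
  · intro q
    unfold Pcon
    apply Finset.sum_nonneg
    intro s _
    by_cases hC : eEq kW kV (s.1, (s.2, if s.1 = 0 then v₀ else q.2.1)) = q.1
    · rw [if_pos hC]
      exact mul_nonneg (muF_nonneg h0 h1 s.1) (hP.1 _)
    · rw [if_neg hC]
  · unfold Pcon
    rw [Finset.sum_comm]
    have step1 : ∀ s : Fin 2 × Fin kW,
        (∑ q : Fin (2*(kW*kV)) × Fin kV × X,
          if eEq kW kV (s.1, (s.2, if s.1 = 0 then v₀ else q.2.1)) = q.1
          then muF lam s.1 * P (s.2, q.2.1, q.2.2) else 0)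
        = muF lam s.1 * ∑ z : Fin kV × X, P (s.2, z.1, z.2) := by
      intro s
      rw [Fintype.sum_prod_type, Finset.sum_comm, Finset.mul_sum]
      apply Finset.sum_congr rfl
      intro z _
      simp
    rw [Finset.sum_congr rfl fun s _ => step1 s, Fintype.sum_prod_type]
    have step2 : ∀ t : Fin 2, (∑ w : Fin kW, muF lam t * ∑ z : Fin kV × X, P (w, z.1, z.2))
        = muF lam t * ∑ w : Fin kW, ∑ z : Fin kV × X, P (w, z.1, z.2) := by
      intro t
      rw [Finset.mul_sum]
    rw [Finset.sum_congr rfl fun t _ => step2 t, ← Finset.sum_mul, muF_sum, one_mul]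
    have hPsum := hP.2
    rw [Fintype.sum_prod_type] at hPsum
    rw [← hPsum]

lemma construction_main {kW kV : ℕ} (f : X → Y1) (Q2 : X → Y2 → ℝ) (hQ2 : ∀ x, IsPMF (Q2 x))
    (P : Fin kW × Fin kV × X → ℝ) (hP : IsPMF P)
    (p : Fin kW × Fin kV × X × Y1 × Y2 → ℝ)
    (hp : ∀ w v x y1 y2, p (w, v, x, y1, y2)
        = P (w, v, x) * ((if y1 = f x then (1:ℝ) else 0) * Q2 x y2))
    (lam : ℝ) (hl0 : 0 ≤ lam) (hl1 : lam ≤ 1) (v₀ : Fin kV) :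
    ∃ P' : Fin (2*(kW*kV)) × Fin kV × X → ℝ, IsPMF P' ∧
      ∃ p' : Fin (2*(kW*kV)) × Fin kV × X × Y1 × Y2 → ℝ,
        (∀ w v x y1 y2, p' (w, v, x, y1, y2)
            = P' (w, v, x) * ((if y1 = f x then (1:ℝ) else 0) * Q2 x y2)) ∧
        Hent p' (fun ω => ω.2.2.2.1) = Hent p (fun ω => ω.2.2.2.1) ∧
        (CHent p' (fun ω => ω.2.2.2.1) (fun ω => ω.1)
            + MI p' (fun ω => ω.1) (fun ω => ω.2.2.2.2)
          = lam * (CHent p (fun ω => ω.2.2.2.1) (fun ω => ω.1)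
              + MI p (fun ω => ω.1) (fun ω => ω.2.2.2.2))
            + (1 - lam) * (CHent p (fun ω => ω.2.2.2.1) (fun ω => (ω.1, ω.2.1))
              + MI p (fun ω => (ω.1, ω.2.1)) (fun ω => ω.2.2.2.2))) ∧
        (CMI p' (fun ω => ω.2.1) (fun ω => ω.2.2.2.2) (fun ω => ω.1)
            - CMI p' (fun ω => ω.2.1) (fun ω => ω.2.2.2.1) (fun ω => ω.1)
          = lam * (CMI p (fun ω => ω.2.1) (fun ω => ω.2.2.2.2) (fun ω => ω.1)
              - CMI p (fun ω => ω.2.1) (fun ω => ω.2.2.2.1) (fun ω => ω.1))) := by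
  have hpmf : IsPMF p := isPMF_of_prod f Q2 hQ2 P hP p hp
  have hμ0 := muF_nonneg hl0 hl1
  have hμs := muF_sum lam
  have hkey := pcon_eq_distOf f Q2 P p hp lam v₀
  have q1 : Hent (pcon f Q2 kW kV v₀ lam P) (fun ω : Fin (2*(kW*kV)) × Fin kV × X × Y1 × Y2 => ω.2.2.2.1)
      = Hent p (fun ω : Fin kW × Fin kV × X × Y1 × Y2 => ω.2.2.2.1) := by
    rw [← hkey]
    exact (hent_pushforward (fun cc : Fin 2 × (Fin kW × Fin kV × X × Y1 × Y2) => muF lam cc.1 * p cc.2) (PhiMap kW kV v₀)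
        (fun ω : Fin (2*(kW*kV)) × Fin kV × X × Y1 × Y2 => ω.2.2.2.1)).trans
      (congrArg entFun (distOf_mix_snd (muF lam) hμs p (fun ω : Fin kW × Fin kV × X × Y1 × Y2 => ω.2.2.2.1)))
  have q2 : Hent (pcon f Q2 kW kV v₀ lam P) (fun ω : Fin (2*(kW*kV)) × Fin kV × X × Y1 × Y2 => ω.2.2.2.2)
      = Hent p (fun ω : Fin kW × Fin kV × X × Y1 × Y2 => ω.2.2.2.2) := by
    rw [← hkey]
    exact (hent_pushforward (fun cc : Fin 2 × (Fin kW × Fin kV × X × Y1 × Y2) => muF lam cc.1 * p cc.2) (PhiMap kW kV v₀)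
        (fun ω : Fin (2*(kW*kV)) × Fin kV × X × Y1 × Y2 => ω.2.2.2.2)).trans
      (congrArg entFun (distOf_mix_snd (muF lam) hμs p (fun ω : Fin kW × Fin kV × X × Y1 × Y2 => ω.2.2.2.2)))
  have q3 : Hent (pcon f Q2 kW kV v₀ lam P) (fun ω : Fin (2*(kW*kV)) × Fin kV × X × Y1 × Y2 => (ω.2.2.2.1, ω.1))
      = entFun (muF lam) + lam * Hent p (fun ω : Fin kW × Fin kV × X × Y1 × Y2 => (ω.2.2.2.1, ω.1))
        + (1 - lam) * Hent p (fun ω : Fin kW × Fin kV × X × Y1 × Y2 => (ω.2.2.2.1, ω.1, ω.2.1)) := by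
    rw [← hkey]
    exact (hent_pushforward (fun cc : Fin 2 × (Fin kW × Fin kV × X × Y1 × Y2) => muF lam cc.1 * p cc.2) (PhiMap kW kV v₀)
        (fun ω : Fin (2*(kW*kV)) × Fin kV × X × Y1 × Y2 => (ω.2.2.2.1, ω.1))).trans
      ((hent_inj (fun cc : Fin 2 × (Fin kW × Fin kV × X × Y1 × Y2) => muF lam cc.1 * p cc.2)
        (fun cc : Fin 2 × (Fin kW × Fin kV × X × Y1 × Y2) => ((cc.1 : Fin 2), (cc.2.2.2.2.1, cc.2.1, if cc.1 = 0 then v₀ else cc.2.2.1)))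
        (fun z : Fin 2 × (Y1 × Fin kW × Fin kV) => (z.2.1, eEq kW kV (z.1, (z.2.2.1, z.2.2.2)))) (by intro z z' h; simp only [Prod.ext_iff, EmbeddingLike.apply_eq_iff_eq] at h ⊢; tauto)).trans
      (hent_mix₂ (muF lam) hμ0 p hpmf
        (fun (t : Fin 2) (ω : Fin kW × Fin kV × X × Y1 × Y2) => (ω.2.2.2.1, ω.1, if t = 0 then v₀ else ω.2.1)) _ _
        (hent_inj p (fun ω : Fin kW × Fin kV × X × Y1 × Y2 => (ω.2.2.2.1, ω.1)) (fun z : Y1 × Fin kW => (z.1, z.2, v₀)) (by intro z z' h; simp only [Prod.ext_iff, EmbeddingLike.apply_eq_iff_eq] at h ⊢; tauto))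
        (hent_inj p (fun ω : Fin kW × Fin kV × X × Y1 × Y2 => (ω.2.2.2.1, ω.1, ω.2.1)) (fun z : Y1 × Fin kW × Fin kV => (z.1, z.2.1, z.2.2)) (by intro z z' h; simp only [Prod.ext_iff, EmbeddingLike.apply_eq_iff_eq] at h ⊢; tauto))))
  have q4 : Hent (pcon f Q2 kW kV v₀ lam P) (fun ω : Fin (2*(kW*kV)) × Fin kV × X × Y1 × Y2 => (ω.1, ω.2.2.2.2))
      = entFun (muF lam) + lam * Hent p (fun ω : Fin kW × Fin kV × X × Y1 × Y2 => (ω.1, ω.2.2.2.2))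
        + (1 - lam) * Hent p (fun ω : Fin kW × Fin kV × X × Y1 × Y2 => ((ω.1, ω.2.1), ω.2.2.2.2)) := by
    rw [← hkey]
    exact (hent_pushforward (fun cc : Fin 2 × (Fin kW × Fin kV × X × Y1 × Y2) => muF lam cc.1 * p cc.2) (PhiMap kW kV v₀)
        (fun ω : Fin (2*(kW*kV)) × Fin kV × X × Y1 × Y2 => (ω.1, ω.2.2.2.2))).trans
      ((hent_inj (fun cc : Fin 2 × (Fin kW × Fin kV × X × Y1 × Y2) => muF lam cc.1 * p cc.2)
        (fun cc : Fin 2 × (Fin kW × Fin kV × X × Y1 × Y2) => ((cc.1 : Fin 2), (cc.2.1, if cc.1 = 0 then v₀ else cc.2.2.1, cc.2.2.2.2.2)))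
        (fun z : Fin 2 × (Fin kW × Fin kV × Y2) => (eEq kW kV (z.1, (z.2.1, z.2.2.1)), z.2.2.2)) (by intro z z' h; simp only [Prod.ext_iff, EmbeddingLike.apply_eq_iff_eq] at h ⊢; tauto)).trans
      (hent_mix₂ (muF lam) hμ0 p hpmf
        (fun (t : Fin 2) (ω : Fin kW × Fin kV × X × Y1 × Y2) => (ω.1, if t = 0 then v₀ else ω.2.1, ω.2.2.2.2)) _ _
        (hent_inj p (fun ω : Fin kW × Fin kV × X × Y1 × Y2 => (ω.1, ω.2.2.2.2)) (fun z : Fin kW × Y2 => (z.1, v₀, z.2)) (by intro z z' h; simp only [Prod.ext_iff, EmbeddingLike.apply_eq_iff_eq] at h ⊢; tauto))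
        (hent_inj p (fun ω : Fin kW × Fin kV × X × Y1 × Y2 => ((ω.1, ω.2.1), ω.2.2.2.2)) (fun z : (Fin kW × Fin kV) × Y2 => (z.1.1, z.1.2, z.2)) (by intro z z' h; simp only [Prod.ext_iff, EmbeddingLike.apply_eq_iff_eq] at h ⊢; tauto))))
  have q5 : Hent (pcon f Q2 kW kV v₀ lam P) (fun ω : Fin (2*(kW*kV)) × Fin kV × X × Y1 × Y2 => (ω.2.2.2.2, ω.1))
      = entFun (muF lam) + lam * Hent p (fun ω : Fin kW × Fin kV × X × Y1 × Y2 => (ω.2.2.2.2, ω.1))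
        + (1 - lam) * Hent p (fun ω : Fin kW × Fin kV × X × Y1 × Y2 => (ω.2.1, ω.2.2.2.2, ω.1)) := by
    rw [← hkey]
    exact (hent_pushforward (fun cc : Fin 2 × (Fin kW × Fin kV × X × Y1 × Y2) => muF lam cc.1 * p cc.2) (PhiMap kW kV v₀)
        (fun ω : Fin (2*(kW*kV)) × Fin kV × X × Y1 × Y2 => (ω.2.2.2.2, ω.1))).trans
      ((hent_inj (fun cc : Fin 2 × (Fin kW × Fin kV × X × Y1 × Y2) => muF lam cc.1 * p cc.2)
        (fun cc : Fin 2 × (Fin kW × Fin kV × X × Y1 × Y2) => ((cc.1 : Fin 2), (cc.2.2.2.2.2, cc.2.1, if cc.1 = 0 then v₀ else cc.2.2.1)))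
        (fun z : Fin 2 × (Y2 × Fin kW × Fin kV) => (z.2.1, eEq kW kV (z.1, (z.2.2.1, z.2.2.2)))) (by intro z z' h; simp only [Prod.ext_iff, EmbeddingLike.apply_eq_iff_eq] at h ⊢; tauto)).trans
      (hent_mix₂ (muF lam) hμ0 p hpmf
        (fun (t : Fin 2) (ω : Fin kW × Fin kV × X × Y1 × Y2) => (ω.2.2.2.2, ω.1, if t = 0 then v₀ else ω.2.1)) _ _
        (hent_inj p (fun ω : Fin kW × Fin kV × X × Y1 × Y2 => (ω.2.2.2.2, ω.1)) (fun z : Y2 × Fin kW => (z.1, z.2, v₀)) (by intro z z' h; simp only [Prod.ext_iff, EmbeddingLike.apply_eq_iff_eq] at h ⊢; tauto))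
        (hent_inj p (fun ω : Fin kW × Fin kV × X × Y1 × Y2 => (ω.2.1, ω.2.2.2.2, ω.1)) (fun z : Fin kV × Y2 × Fin kW => (z.2.1, z.2.2, z.1)) (by intro z z' h; simp only [Prod.ext_iff, EmbeddingLike.apply_eq_iff_eq] at h ⊢; tauto))))
  have q6 : Hent (pcon f Q2 kW kV v₀ lam P) (fun ω : Fin (2*(kW*kV)) × Fin kV × X × Y1 × Y2 => (ω.2.1, ω.2.2.2.2, ω.1))
      = entFun (muF lam) + lam * Hent p (fun ω : Fin kW × Fin kV × X × Y1 × Y2 => (ω.2.1, ω.2.2.2.2, ω.1))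
        + (1 - lam) * Hent p (fun ω : Fin kW × Fin kV × X × Y1 × Y2 => (ω.2.1, ω.2.2.2.2, ω.1)) := by
    rw [← hkey]
    exact (hent_pushforward (fun cc : Fin 2 × (Fin kW × Fin kV × X × Y1 × Y2) => muF lam cc.1 * p cc.2) (PhiMap kW kV v₀)
        (fun ω : Fin (2*(kW*kV)) × Fin kV × X × Y1 × Y2 => (ω.2.1, ω.2.2.2.2, ω.1))).trans
      ((hent_inj (fun cc : Fin 2 × (Fin kW × Fin kV × X × Y1 × Y2) => muF lam cc.1 * p cc.2)
        (fun cc : Fin 2 × (Fin kW × Fin kV × X × Y1 × Y2) => ((cc.1 : Fin 2), (cc.2.2.1, cc.2.2.2.2.2, cc.2.1, if cc.1 = 0 then v₀ else cc.2.2.1)))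
        (fun z : Fin 2 × (Fin kV × Y2 × Fin kW × Fin kV) => (z.2.1, z.2.2.1, eEq kW kV (z.1, (z.2.2.2.1, z.2.2.2.2)))) (by intro z z' h; simp only [Prod.ext_iff, EmbeddingLike.apply_eq_iff_eq] at h ⊢; tauto)).trans
      (hent_mix₂ (muF lam) hμ0 p hpmf
        (fun (t : Fin 2) (ω : Fin kW × Fin kV × X × Y1 × Y2) => (ω.2.1, ω.2.2.2.2, ω.1, if t = 0 then v₀ else ω.2.1)) _ _
        (hent_inj p (fun ω : Fin kW × Fin kV × X × Y1 × Y2 => (ω.2.1, ω.2.2.2.2, ω.1)) (fun z : Fin kV × Y2 × Fin kW => (z.1, z.2.1, z.2.2, v₀)) (by intro z z' h; simp only [Prod.ext_iff, EmbeddingLike.apply_eq_iff_eq] at h ⊢; tauto))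
        (hent_inj p (fun ω : Fin kW × Fin kV × X × Y1 × Y2 => (ω.2.1, ω.2.2.2.2, ω.1)) (fun z : Fin kV × Y2 × Fin kW => (z.1, z.2.1, z.2.2, z.1)) (by intro z z' h; simp only [Prod.ext_iff, EmbeddingLike.apply_eq_iff_eq] at h ⊢; tauto))))
  have q7 : Hent (pcon f Q2 kW kV v₀ lam P) (fun ω : Fin (2*(kW*kV)) × Fin kV × X × Y1 × Y2 => (ω.2.1, ω.2.2.2.1, ω.1))
      = entFun (muF lam) + lam * Hent p (fun ω : Fin kW × Fin kV × X × Y1 × Y2 => (ω.2.1, ω.2.2.2.1, ω.1))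
        + (1 - lam) * Hent p (fun ω : Fin kW × Fin kV × X × Y1 × Y2 => (ω.2.1, ω.2.2.2.1, ω.1)) := by
    rw [← hkey]
    exact (hent_pushforward (fun cc : Fin 2 × (Fin kW × Fin kV × X × Y1 × Y2) => muF lam cc.1 * p cc.2) (PhiMap kW kV v₀)
        (fun ω : Fin (2*(kW*kV)) × Fin kV × X × Y1 × Y2 => (ω.2.1, ω.2.2.2.1, ω.1))).trans
      ((hent_inj (fun cc : Fin 2 × (Fin kW × Fin kV × X × Y1 × Y2) => muF lam cc.1 * p cc.2)
        (fun cc : Fin 2 × (Fin kW × Fin kV × X × Y1 × Y2) => ((cc.1 : Fin 2), (cc.2.2.1, cc.2.2.2.2.1, cc.2.1, if cc.1 = 0 then v₀ else cc.2.2.1)))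
        (fun z : Fin 2 × (Fin kV × Y1 × Fin kW × Fin kV) => (z.2.1, z.2.2.1, eEq kW kV (z.1, (z.2.2.2.1, z.2.2.2.2)))) (by intro z z' h; simp only [Prod.ext_iff, EmbeddingLike.apply_eq_iff_eq] at h ⊢; tauto)).trans
      (hent_mix₂ (muF lam) hμ0 p hpmf
        (fun (t : Fin 2) (ω : Fin kW × Fin kV × X × Y1 × Y2) => (ω.2.1, ω.2.2.2.1, ω.1, if t = 0 then v₀ else ω.2.1)) _ _
        (hent_inj p (fun ω : Fin kW × Fin kV × X × Y1 × Y2 => (ω.2.1, ω.2.2.2.1, ω.1)) (fun z : Fin kV × Y1 × Fin kW => (z.1, z.2.1, z.2.2, v₀)) (by intro z z' h; simp only [Prod.ext_iff, EmbeddingLike.apply_eq_iff_eq] at h ⊢; tauto))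
        (hent_inj p (fun ω : Fin kW × Fin kV × X × Y1 × Y2 => (ω.2.1, ω.2.2.2.1, ω.1)) (fun z : Fin kV × Y1 × Fin kW => (z.1, z.2.1, z.2.2, z.1)) (by intro z z' h; simp only [Prod.ext_iff, EmbeddingLike.apply_eq_iff_eq] at h ⊢; tauto))))
  have R5 : Hent p (fun ω : Fin kW × Fin kV × X × Y1 × Y2 => (ω.2.2.2.1, ω.1, ω.2.1))
      = Hent p (fun ω : Fin kW × Fin kV × X × Y1 × Y2 => (ω.2.1, ω.2.2.2.1, ω.1)) :=
    hent_inj p (fun ω : Fin kW × Fin kV × X × Y1 × Y2 => (ω.2.1, ω.2.2.2.1, ω.1))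
      (fun z : Fin kV × Y1 × Fin kW => (z.2.1, z.2.2, z.1)) (by intro z z' h; simp only [Prod.ext_iff, EmbeddingLike.apply_eq_iff_eq] at h ⊢; tauto)
  have q3b := q3
  rw [R5] at q3b
  refine ⟨Pcon kW kV v₀ lam P, pcon_isPMF v₀ lam hl0 hl1 P hP,
    pcon f Q2 kW kV v₀ lam P, fun w v x y1 y2 => rfl, q1, ?_, ?_⟩
  · simp only [CHent, MI]
    linarith [q2, q3, q4]
  · simp only [CMI]
    linarith [q3b, q5, q6, q7]

end construction

/-- **Appendix A.** The two descriptions of the secrecy-capacity region of the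
semi-deterministic BC with a confidential message `M2` coincide. -/
theorem sd_m2_region_equiv {X Y1 Y2 : Type} [Fintype X] [Fintype Y1] [Fintype Y2]
    (f : X → Y1) (Q2 : X → Y2 → ℝ) (hQ2 : ∀ x, IsPMF (Q2 x)) :
    {r : ℝ × ℝ | 0 ≤ r.1 ∧ 0 ≤ r.2 ∧
      ∃ (kW kV : ℕ) (P : Fin kW × Fin kV × X → ℝ), IsPMF P ∧
        ∃ p : Fin kW × Fin kV × X × Y1 × Y2 → ℝ,
          (∀ w v x y1 y2, p (w, v, x, y1, y2)
              = P (w, v, x) * ((if y1 = f x then (1 : ℝ) else 0) * Q2 x y2)) ∧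
          r.1 ≤ Hent p (fun ω => ω.2.2.2.1) ∧
          r.1 ≤ CHent p (fun ω => ω.2.2.2.1) (fun ω => ω.1)
              + MI p (fun ω => ω.1) (fun ω => ω.2.2.2.2) ∧
          r.2 ≤ CMI p (fun ω => ω.2.1) (fun ω => ω.2.2.2.2) (fun ω => ω.1)
              - CMI p (fun ω => ω.2.1) (fun ω => ω.2.2.2.1) (fun ω => ω.1)} =
    {r : ℝ × ℝ | 0 ≤ r.1 ∧ 0 ≤ r.2 ∧
      ∃ (kW kV : ℕ) (P : Fin kW × Fin kV × X → ℝ), IsPMF P ∧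
        ∃ p : Fin kW × Fin kV × X × Y1 × Y2 → ℝ,
          (∀ w v x y1 y2, p (w, v, x, y1, y2)
              = P (w, v, x) * ((if y1 = f x then (1 : ℝ) else 0) * Q2 x y2)) ∧
          r.1 ≤ Hent p (fun ω => ω.2.2.2.1) ∧
          r.2 ≤ CMI p (fun ω => ω.2.1) (fun ω => ω.2.2.2.2) (fun ω => ω.1)
              - CMI p (fun ω => ω.2.1) (fun ω => ω.2.2.2.1) (fun ω => ω.1) ∧
          r.1 + r.2 ≤ CHent p (fun ω => ω.2.2.2.1) (fun ω => (ω.1, ω.2.1))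
              + MI p (fun ω => (ω.1, ω.2.1)) (fun ω => ω.2.2.2.2)} := by
  ext r
  simp only [Set.mem_setOf_eq]
  constructor
  · rintro ⟨h1, h2, kW, kV, P, hP, p, hp, hA1, hA2, hA3⟩
    refine ⟨h1, h2, kW, kV, P, hP, p, hp, hA1, hA3, ?_⟩
    have habc := abc_identity p
    linarith [habc, hA2, hA3]
  · rintro ⟨h1, h2, kW, kV, P, hP, p, hp, hB1, hB2, hB3⟩
    have habc := abc_identity p
    by_cases hcase : r.1 ≤ CHent p (fun ω => ω.2.2.2.1) (fun ω => ω.1)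
        + MI p (fun ω => ω.1) (fun ω => ω.2.2.2.2)
    · exact ⟨h1, h2, kW, kV, P, hP, p, hp, hB1, hcase, hB2⟩
    · push_neg at hcase
      have hcpos : 0 < CMI p (fun ω => ω.2.1) (fun ω => ω.2.2.2.2) (fun ω => ω.1)
          - CMI p (fun ω => ω.2.1) (fun ω => ω.2.2.2.1) (fun ω => ω.1) := by
        linarith
      have hne : Nonempty (Fin kW × Fin kV × X) := by
        by_contra hcon
        rw [not_nonempty_iff] at hcon
        have hs := hP.2
        rw [Finset.univ_eq_empty, Finset.sum_empty] at hs
        norm_num at hs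
      obtain ⟨⟨w1, v₀, x1⟩⟩ := hne
      have hlc : (r.2 / (CMI p (fun ω => ω.2.1) (fun ω => ω.2.2.2.2) (fun ω => ω.1)
            - CMI p (fun ω => ω.2.1) (fun ω => ω.2.2.2.1) (fun ω => ω.1)))
          * (CMI p (fun ω => ω.2.1) (fun ω => ω.2.2.2.2) (fun ω => ω.1)
            - CMI p (fun ω => ω.2.1) (fun ω => ω.2.2.2.1) (fun ω => ω.1)) = r.2 :=
        div_mul_cancel₀ r.2 (ne_of_gt hcpos)
      obtain ⟨P', hP', p', hp', hq1, hq2, hq3⟩ :=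
        construction_main f Q2 hQ2 P hP p hp
          (r.2 / (CMI p (fun ω => ω.2.1) (fun ω => ω.2.2.2.2) (fun ω => ω.1)
            - CMI p (fun ω => ω.2.1) (fun ω => ω.2.2.2.1) (fun ω => ω.1)))
          (div_nonneg h2 hcpos.le)
          (by rw [div_le_one hcpos]; linarith) v₀
      refine ⟨h1, h2, 2*(kW*kV), kV, P', hP', p', hp', ?_, ?_, ?_⟩
      · rw [hq1]
        exact hB1
      · rw [hq2]
        have hx : (r.2 / (CMI p (fun ω => ω.2.1) (fun ω => ω.2.2.2.2) (fun ω => ω.1)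
              - CMI p (fun ω => ω.2.1) (fun ω => ω.2.2.2.1) (fun ω => ω.1)))
              * (CHent p (fun ω => ω.2.2.2.1) (fun ω => ω.1)
                + MI p (fun ω => ω.1) (fun ω => ω.2.2.2.2))
            + (1 - (r.2 / (CMI p (fun ω => ω.2.1) (fun ω => ω.2.2.2.2) (fun ω => ω.1)
              - CMI p (fun ω => ω.2.1) (fun ω => ω.2.2.2.1) (fun ω => ω.1))))
              * (CHent p (fun ω => ω.2.2.2.1) (fun ω => (ω.1, ω.2.1))
                + MI p (fun ω => (ω.1, ω.2.1)) (fun ω => ω.2.2.2.2))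
            = (CHent p (fun ω => ω.2.2.2.1) (fun ω => (ω.1, ω.2.1))
                + MI p (fun ω => (ω.1, ω.2.1)) (fun ω => ω.2.2.2.2))
              - (r.2 / (CMI p (fun ω => ω.2.1) (fun ω => ω.2.2.2.2) (fun ω => ω.1)
                - CMI p (fun ω => ω.2.1) (fun ω => ω.2.2.2.1) (fun ω => ω.1)))
                * (CMI p (fun ω => ω.2.1) (fun ω => ω.2.2.2.2) (fun ω => ω.1)
                  - CMI p (fun ω => ω.2.1) (fun ω => ω.2.2.2.1) (fun ω => ω.1)) := by
          rw [habc]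
          ring
        linarith [hx, hlc, hB3]
      · rw [hq3]
        linarith [hlc]
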